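/- In a tuple $\mathbf{p} = (p_1,\dots,p_l) \in P(C_n;\mu,\lambda)$ (no ordinarily intersecting pair), no three paths $p_i, p_j, p_k$ pass simultaneously through a common lattice point. Consequently $P(C_n;\mu,\lambda)$ decomposes as the disjoint union $\bigsqcup_{k=0}^{l-1} P_k(C_n;\mu,\lambda)$ over the number $k$ of transposed pairs. -/
import Mathlib


/-!
STATEMENT 16: For a tuple `p ∈ P(Cₙ;μ,λ)` (no ordinarily intersecting
pair), no three of its paths pass through a common lattice point; hence
`P(Cₙ;μ,λ)` is the disjoint union `⊔_{k=0}^{l-1} P_k(Cₙ;μ,λ)` over the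
number `k` of transposed pairs.

Setting as in the paper: `h`-paths of type `Cₙ` are monotone north/east
lattice paths from height `-n` to height `n` with evenly many east steps at
height `0`; a pair is specially intersecting if the intersection occurs only
at height `0` and the horizontal distance between the leftmost height-`0`
points is odd, ordinarily intersecting otherwise; tuples start at
`uᵢ = (μᵢ + 1 - i, -n)` and end at a permutation of `vⱼ = (λⱼ + 1 - j, n)`.
-/

/-- Number of north steps strictly before position `p`. -/
def northsBefore (w : List Bool) (p : ℕ) : ℕ := (w.take p).count true

/-- Number of east steps strictly before position `p`. -/
def eastsBefore (w : List Bool) (p : ℕ) : ℕ := (w.take p).count false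

/-- Number of east steps at height `0` strictly before position `p`. -/
def zeroEastsBefore (n : ℕ) (w : List Bool) (p : ℕ) : ℕ :=
  ((Finset.range p).filter fun q =>
    w.getD q true = false ∧ northsBefore w q = n).card

/-- Total number of east steps at height `0`. -/
def zeroEasts (n : ℕ) (w : List Bool) : ℕ := zeroEastsBefore n w w.length

/-- An `h`-path of type `Cₙ`. -/
structure CPath (n : ℕ) where
  x0 : ℤ
  w : List Bool
  norths : w.count true = 2 * n
  even_zero : Even (zeroEasts n w)

namespace CPath

variable {n : ℕ}

/-- The lattice point reached after `k` steps. -/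
def pt (p : CPath n) (k : ℕ) : ℤ × ℤ :=
  (p.x0 + (eastsBefore p.w k : ℤ), (northsBefore p.w k : ℤ) - (n : ℤ))

/-- The set of lattice points on the path. -/
def points (p : CPath n) : Set (ℤ × ℤ) :=
  {q | ∃ k, k ≤ p.w.length ∧ p.pt k = q}

/-- The final `x`-coordinate. -/
def endX (p : CPath n) : ℤ := p.x0 + (p.w.count false : ℤ)

/-- Two paths intersect if they share a lattice point. -/
def Meets (p q : CPath n) : Prop := (p.points ∩ q.points).Nonempty

/-- The `x`-coordinate of the leftmost point at height `0`. -/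
def firstZeroX (p : CPath n) : ℤ :=
  p.x0 + (((Finset.range p.w.length).filter fun q =>
    p.w.getD q true = false ∧ northsBefore p.w q < n).card : ℤ)

/-- Specially intersecting. -/
def SpeciallyIntersecting (p q : CPath n) : Prop :=
  Meets p q ∧ (∀ v ∈ p.points ∩ q.points, v.2 = 0) ∧
    Odd (p.firstZeroX - q.firstZeroX).natAbs

/-- Ordinarily intersecting. -/
def OrdinarilyIntersecting (p q : CPath n) : Prop :=
  Meets p q ∧ ¬ SpeciallyIntersecting p q

/-- Transposed pair. -/
def Transposed (p q : CPath n) : Prop :=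
  (p.x0 - q.x0) * (p.endX - q.endX) < 0

end CPath



private lemma ivtN (f : ℕ → ℕ) (hstep : ∀ k, f (k+1) ≤ f k + 1) (m b : ℕ)
    (h1 : f 0 ≤ m) (h2 : m ≤ f b) : ∃ k, k ≤ b ∧ f k = m := by
  induction b with
  | zero => exact ⟨0, le_refl _, le_antisymm h1 h2⟩
  | succ b ih =>
    by_cases h : m ≤ f b
    · obtain ⟨k, hk, hfk⟩ := ih h
      exact ⟨k, hk.trans (Nat.le_succ b), hfk⟩
    · exact ⟨b+1, le_refl _, by have := hstep b; omega⟩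

private lemma ivtZ (f : ℕ → ℤ) (hstep : ∀ k, f (k+1) ≤ f k + 1) (b : ℕ)
    (h1 : f 0 ≤ 0) (h2 : 0 ≤ f b) : ∃ k, k ≤ b ∧ f k = 0 := by
  induction b with
  | zero => exact ⟨0, le_refl _, le_antisymm h1 h2⟩
  | succ b ih =>
    by_cases h : 0 ≤ f b
    · obtain ⟨k, hk, hfk⟩ := ih h
      exact ⟨k, hk.trans (Nat.le_succ b), hfk⟩
    · exact ⟨b+1, le_refl _, by have := hstep b; omega⟩

private lemma count_take_succ_le (w : List Bool) (b : Bool) (k : ℕ) :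
    (w.take (k+1)).count b ≤ (w.take k).count b + 1 := by
  rw [List.take_succ, List.count_append]
  rcases h : w[k]? with _ | x
  · simp
  · rcases x <;> rcases b <;> simp [List.count_cons, List.count_nil]

private lemma count_take_mono (w : List Bool) (b : Bool) {k m : ℕ} (h : k ≤ m) :
    (w.take k).count b ≤ (w.take m).count b := by
  have h1 : w.take k = (w.take m).take k := by
    rw [List.take_take, min_eq_left h]
  rw [h1]
  exact (List.take_sublist _ _).count_le b

private lemma count_true_add_count_false (l : List Bool) :
    l.count true + l.count false = l.length := by
  induction l with
  | nil => simp
  | cons a l ih => cases a <;> simp [List.count_cons] <;> omega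

lemma norths_add_easts (w : List Bool) (k : ℕ) :
    northsBefore w k + eastsBefore w k = min k w.length := by
  unfold northsBefore eastsBefore
  rw [count_true_add_count_false, List.length_take]

lemma northsBefore_zero (w : List Bool) : northsBefore w 0 = 0 := by
  simp [northsBefore]

lemma northsBefore_length (w : List Bool) : northsBefore w w.length = w.count true := by
  simp [northsBefore]

lemma eastsBefore_length (w : List Bool) : eastsBefore w w.length = w.count false := by
  simp [eastsBefore]

lemma northsBefore_le_succ (w : List Bool) (k : ℕ) :
    northsBefore w (k+1) ≤ northsBefore w k + 1 := count_take_succ_le w true k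

lemma eastsBefore_le_succ (w : List Bool) (k : ℕ) :
    eastsBefore w (k+1) ≤ eastsBefore w k + 1 := count_take_succ_le w false k

lemma northsBefore_mono (w : List Bool) {k m : ℕ} (h : k ≤ m) :
    northsBefore w k ≤ northsBefore w m := count_take_mono w true h

lemma eastsBefore_mono (w : List Bool) {k m : ℕ} (h : k ≤ m) :
    eastsBefore w k ≤ eastsBefore w m := count_take_mono w false h

lemma eastsBefore_le (w : List Bool) (k : ℕ) : eastsBefore w k ≤ k := by
  have := norths_add_easts w k
  omega

lemma northsBefore_le_count (w : List Bool) (k : ℕ) :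
    northsBefore w k ≤ w.count true := by
  by_cases h : k ≤ w.length
  · rw [← northsBefore_length]; exact northsBefore_mono w h
  · unfold northsBefore
    rw [List.take_of_length_le (by omega)]

private lemma card_filter_eq_count (w : List Bool) (m : ℕ) (hm : m ≤ w.length) :
    ((Finset.range m).filter fun q => w.getD q true = false).card
      = (w.take m).count false := by
  induction m with
  | zero => simp
  | succ m ih =>
    rw [Finset.range_add_one, Finset.filter_insert, List.take_succ, List.count_append]
    have hlt : m < w.length := hm
    have hg : w[m]? = some w[m] := List.getElem?_eq_getElem hlt
    have hgd : w.getD m true = w[m] := List.getD_eq_getElem w true hlt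
    rw [hg]
    by_cases hb : w.getD m true = false
    · rw [if_pos hb, Finset.card_insert_of_notMem (by simp)]
      rw [ih (by omega)]
      rw [hgd] at hb
      simp [hb]
    · rw [if_neg hb, ih (by omega)]
      rw [hgd] at hb
      have : w[m] = true := by
        rcases h : w[m] with _ | _
        · exact absurd h hb
        · rfl
      simp [this]

namespace CPath

variable {n : ℕ}

lemma length_w (p : CPath n) : p.w.length = 2 * n + p.w.count false := by
  have := count_true_add_count_false p.w
  rw [p.norths] at this
  omega

lemma endX_eq (p : CPath n) : p.endX = p.x0 + (p.w.count false : ℤ) := rfl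

lemma meets_symm {p q : CPath n} (h : Meets p q) : Meets q p := by
  unfold Meets at *
  rwa [Set.inter_comm]

lemma meets_of_lt (p q : CPath n) (h1 : p.x0 < q.x0) (h2 : q.endX < p.endX) :
    Meets p q := by
  set δ : ℕ := (q.x0 - p.x0).toNat with hδdef
  have hδ : (δ : ℤ) = q.x0 - p.x0 := Int.toNat_of_nonneg (by omega)
  have hlenp : (p.w.length : ℤ) = 2 * n + (p.endX - p.x0) := by
    rw [p.length_w, p.endX_eq]; push_cast; ring
  have hlenq : (q.w.length : ℤ) = 2 * n + (q.endX - q.x0) := by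
    rw [q.length_w, q.endX_eq]; push_cast; ring
  have hle : q.w.length + δ ≤ p.w.length := by
    have : ((q.w.length + δ : ℕ) : ℤ) ≤ (p.w.length : ℤ) := by
      push_cast; omega
    exact_mod_cast this
  set D : ℕ → ℤ := fun j =>
    (eastsBefore p.w (j + δ) : ℤ) + p.x0 - ((eastsBefore q.w j : ℤ) + q.x0) with hD
  have hstep : ∀ j, D (j+1) ≤ D j + 1 := by
    intro j
    have h1 := eastsBefore_le_succ p.w (j + δ)
    have h2 := eastsBefore_mono q.w (Nat.le_succ j)
    simp only [Nat.succ_eq_add_one] at h2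
    simp only [hD]
    have : j + 1 + δ = (j + δ) + 1 := by omega
    rw [this]
    push_cast
    omega
  have hD0 : D 0 ≤ 0 := by
    have := eastsBefore_le p.w δ
    simp only [hD]
    have h0 : (0:ℕ) + δ = δ := by omega
    rw [h0]
    have he : eastsBefore q.w 0 = 0 := by simp [eastsBefore]
    rw [he]
    push_cast
    omega
  have hDb : 0 ≤ D q.w.length := by
    have hsum := norths_add_easts p.w (q.w.length + δ)
    rw [min_eq_left hle] at hsum
    have hn := northsBefore_le_count p.w (q.w.length + δ)
    rw [p.norths] at hn
    have heq : eastsBefore q.w q.w.length = q.w.count false := eastsBefore_length q.w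
    simp only [hD, heq]
    have : ((q.w.count false : ℕ) : ℤ) = q.endX - q.x0 := by
      rw [q.endX_eq]; ring
    rw [this]
    have hq2 : ((eastsBefore p.w (q.w.length + δ) : ℕ) : ℤ)
        = (q.w.length : ℤ) + δ - (northsBefore p.w (q.w.length + δ) : ℤ) := by
      push_cast; omega
    rw [hq2]
    have hncast : (northsBefore p.w (q.w.length + δ) : ℤ) ≤ 2 * n := by exact_mod_cast hn
    omega
  obtain ⟨j, hj, hj0⟩ := ivtZ D hstep q.w.length hD0 hDb
  refine ⟨p.pt (j + δ), ⟨j + δ, by omega, rfl⟩, ⟨j, hj, ?_⟩⟩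
  have hsum1 := norths_add_easts p.w (j + δ)
  rw [min_eq_left (by omega)] at hsum1
  have hsum2 := norths_add_easts q.w j
  rw [min_eq_left hj] at hsum2
  simp only [hD] at hj0
  unfold pt
  have hx : q.x0 + (eastsBefore q.w j : ℤ) = p.x0 + (eastsBefore p.w (j + δ) : ℤ) := by omega
  have hy : (northsBefore q.w j : ℤ) = (northsBefore p.w (j + δ) : ℤ) := by
    have c1 : (northsBefore p.w (j + δ) : ℤ) + (eastsBefore p.w (j + δ) : ℤ) = j + δ := by
      exact_mod_cast congrArg (Nat.cast : ℕ → ℤ) hsum1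
    have c2 : (northsBefore q.w j : ℤ) + (eastsBefore q.w j : ℤ) = j := by
      exact_mod_cast congrArg (Nat.cast : ℕ → ℤ) hsum2
    omega
  rw [hx, hy]

lemma transposed_meets {p q : CPath n} (h : Transposed p q) : Meets p q := by
  unfold Transposed at h
  rcases mul_neg_iff.mp h with ⟨ha, hb⟩ | ⟨ha, hb⟩
  · exact meets_symm (meets_of_lt q p (by omega) (by omega))
  · exact meets_of_lt p q (by omega) (by omega)

lemma firstZeroX_spec (p : CPath n) :
    ∃ k0, k0 ≤ p.w.length ∧ northsBefore p.w k0 = n ∧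
      (∀ k, northsBefore p.w k = n → k0 ≤ k) ∧
      p.firstZeroX = p.x0 + (eastsBefore p.w k0 : ℤ) := by
  have hex : ∃ k, northsBefore p.w k = n := by
    obtain ⟨k, hk, hfk⟩ := ivtN (northsBefore p.w) (northsBefore_le_succ p.w) n p.w.length
      (by rw [northsBefore_zero]; omega)
      (by rw [northsBefore_length, p.norths]; omega)
    exact ⟨k, hfk⟩
  classical
  set k0 := Nat.find hex with hk0
  have hk0n : northsBefore p.w k0 = n := Nat.find_spec hex
  have hk0min : ∀ k, northsBefore p.w k = n → k0 ≤ k := fun k hk => Nat.find_le hk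
  have hk0len : k0 ≤ p.w.length := by
    obtain ⟨k, hk, hfk⟩ := ivtN (northsBefore p.w) (northsBefore_le_succ p.w) n p.w.length
      (by rw [northsBefore_zero]; omega)
      (by rw [northsBefore_length, p.norths]; omega)
    exact (hk0min k hfk).trans hk
  refine ⟨k0, hk0len, hk0n, hk0min, ?_⟩
  unfold firstZeroX
  congr 1
  have hset : ((Finset.range p.w.length).filter fun q =>
      p.w.getD q true = false ∧ northsBefore p.w q < n)
      = (Finset.range k0).filter fun q => p.w.getD q true = false := by
    ext q
    simp only [Finset.mem_filter, Finset.mem_range]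
    constructor
    · rintro ⟨hq, hg, hn⟩
      refine ⟨?_, hg⟩
      by_contra hc
      push_neg at hc
      have := northsBefore_mono p.w hc
      omega
    · rintro ⟨hq, hg⟩
      refine ⟨by omega, hg, ?_⟩
      have h1 : northsBefore p.w q ≤ n := by
        have := northsBefore_mono p.w (show q ≤ k0 by omega)
        omega
      have h2 : northsBefore p.w q ≠ n := fun hc => by have := hk0min q hc; omega
      omega
  rw [hset, card_filter_eq_count p.w k0 hk0len]
  rfl

lemma firstZeroX_mem (p : CPath n) : (p.firstZeroX, (0:ℤ)) ∈ p.points := by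
  obtain ⟨k0, hlen, hn, _, hfx⟩ := p.firstZeroX_spec
  refine ⟨k0, hlen, ?_⟩
  unfold pt
  rw [hn, hfx]
  simp

lemma firstZeroX_min (p : CPath n) {x : ℤ} (hx : (x, (0:ℤ)) ∈ p.points) :
    p.firstZeroX ≤ x := by
  obtain ⟨k0, hlen, hn0, hmin, hfx⟩ := p.firstZeroX_spec
  obtain ⟨k, hk, hpt⟩ := hx
  unfold pt at hpt
  have hy : (northsBefore p.w k : ℤ) - n = 0 := congrArg Prod.snd hpt
  have hn : northsBefore p.w k = n := by
    have : (northsBefore p.w k : ℤ) = n := by omega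
    exact_mod_cast this
  have hxeq : p.x0 + (eastsBefore p.w k : ℤ) = x := congrArg Prod.fst hpt
  have := eastsBefore_mono p.w (hmin k hn)
  rw [hfx]
  have : ((eastsBefore p.w k0 : ℕ) : ℤ) ≤ (eastsBefore p.w k : ℤ) := by exact_mod_cast this
  omega

lemma zero_interval (p : CPath n) {x y : ℤ} (hx : (x, (0:ℤ)) ∈ p.points)
    (h1 : p.firstZeroX ≤ y) (h2 : y ≤ x) : (y, (0:ℤ)) ∈ p.points := by
  obtain ⟨k0, hlen0, hn0, hmin, hfx⟩ := p.firstZeroX_spec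
  obtain ⟨k2, hk2, hpt⟩ := hx
  unfold pt at hpt
  have hy : (northsBefore p.w k2 : ℤ) - n = 0 := congrArg Prod.snd hpt
  have hn2 : northsBefore p.w k2 = n := by
    have : (northsBefore p.w k2 : ℤ) = n := by omega
    exact_mod_cast this
  have hxeq : p.x0 + (eastsBefore p.w k2 : ℤ) = x := congrArg Prod.fst hpt
  have hk02 : k0 ≤ k2 := hmin k2 hn2
  have htnn : 0 ≤ y - p.x0 := by
    have : (0:ℤ) ≤ (eastsBefore p.w k0 : ℤ) := by positivity
    omega
  set t : ℕ := (y - p.x0).toNat with ht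
  have htc : (t : ℤ) = y - p.x0 := Int.toNat_of_nonneg htnn
  have hlow : eastsBefore p.w k0 ≤ t := by
    have : ((eastsBefore p.w k0 : ℕ) : ℤ) ≤ (t : ℤ) := by omega
    exact_mod_cast this
  have hhigh : t ≤ eastsBefore p.w k2 := by
    have : (t : ℤ) ≤ ((eastsBefore p.w k2 : ℕ) : ℤ) := by omega
    exact_mod_cast this
  obtain ⟨j, hj, hfj⟩ := ivtN (fun j => eastsBefore p.w (k0 + j))
    (fun j => by
      show eastsBefore p.w (k0 + (j + 1)) ≤ eastsBefore p.w (k0 + j) + 1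
      rw [show k0 + (j + 1) = (k0 + j) + 1 by omega]
      exact eastsBefore_le_succ p.w (k0 + j)) t (k2 - k0)
    (by show eastsBefore p.w (k0 + 0) ≤ t; rw [Nat.add_zero]; exact hlow)
    (by show t ≤ eastsBefore p.w (k0 + (k2 - k0))
        rw [show k0 + (k2 - k0) = k2 by omega]; exact hhigh)
  have hfj' : eastsBefore p.w (k0 + j) = t := hfj
  refine ⟨k0 + j, by omega, ?_⟩
  have hnk : northsBefore p.w (k0 + j) = n := by
    have ha := northsBefore_mono p.w (show k0 ≤ k0 + j by omega)
    have hb := northsBefore_mono p.w (show k0 + j ≤ k2 by omega)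
    omega
  unfold pt
  rw [hnk, hfj']
  simp
  omega

end CPath

/-- The tuple `p` joins `uᵢ` to `v_{π(i)}` (0-indexed coordinates). -/
def IsTuple (n l : ℕ) (lam mu : ℕ → ℕ) (π : Equiv.Perm (Fin l))
    (p : Fin l → CPath n) : Prop :=
  ∀ i : Fin l, (p i).x0 = (mu i : ℤ) - (i : ℕ) ∧
    (p i).endX = (lam (π i) : ℤ) - ((π i : Fin l) : ℕ)

/-- `P(Cₙ; μ, λ)`. -/
def PCn (n l : ℕ) (lam mu : ℕ → ℕ) : Set (Fin l → CPath n) :=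
  {p | (∃ π : Equiv.Perm (Fin l), IsTuple n l lam mu π p) ∧
    ∀ i j : Fin l, i ≠ j →
      ¬ CPath.OrdinarilyIntersecting (p i) (p j)}

/-- The number of transposed pairs of a tuple. -/
noncomputable def numTrans {n l : ℕ} (p : Fin l → CPath n) : ℕ :=
  Nat.card {q : Fin l × Fin l //
    q.1 < q.2 ∧ CPath.Transposed (p q.1) (p q.2)}

/-- `P_k(Cₙ; μ, λ)`. -/
def PCk (n l : ℕ) (lam mu : ℕ → ℕ) (k : ℕ) : Set (Fin l → CPath n) :=
  {p ∈ PCn n l lam mu | numTrans p = k}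


lemma special_symm {n : ℕ} {p q : CPath n} (h : CPath.SpeciallyIntersecting p q) :
    CPath.SpeciallyIntersecting q p := by
  obtain ⟨hm, hz, ho⟩ := h
  refine ⟨CPath.meets_symm hm, ?_, ?_⟩
  · rw [Set.inter_comm]; exact hz
  · rwa [show q.firstZeroX - p.firstZeroX = -(p.firstZeroX - q.firstZeroX) by ring,
      Int.natAbs_neg]

lemma key_lemma {n l : ℕ} (p : Fin l → CPath n)
    (hspec : ∀ i j : Fin l, i ≠ j → CPath.Meets (p i) (p j) →
      CPath.SpeciallyIntersecting (p i) (p j))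
    (u v w : Fin l) (huv : u ≠ v) (hwv : w ≠ v) (huw : u ≠ w)
    (hmu : CPath.Meets (p u) (p v)) (hmw : CPath.Meets (p w) (p v))
    (hfu : (p u).firstZeroX < (p v).firstZeroX)
    (hfw : (p w).firstZeroX < (p v).firstZeroX) : False := by
  have su := hspec u v huv hmu
  have sw := hspec w v hwv hmw
  obtain ⟨z, hzu, hzv⟩ := hmu
  have hz0 : z.2 = 0 := su.2.1 z ⟨hzu, hzv⟩
  have hz : z = (z.1, (0:ℤ)) := by rw [← hz0]
  rw [hz] at hzu hzv
  have hge : (p v).firstZeroX ≤ z.1 := (p v).firstZeroX_min hzv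
  have hmemu : ((p v).firstZeroX, (0:ℤ)) ∈ (p u).points :=
    (p u).zero_interval hzu (le_of_lt hfu) hge
  obtain ⟨z', hz'w, hz'v⟩ := hmw
  have hz'0 : z'.2 = 0 := sw.2.1 z' ⟨hz'w, hz'v⟩
  have hz' : z' = (z'.1, (0:ℤ)) := by rw [← hz'0]
  rw [hz'] at hz'w hz'v
  have hge' : (p v).firstZeroX ≤ z'.1 := (p v).firstZeroX_min hz'v
  have hmemw : ((p v).firstZeroX, (0:ℤ)) ∈ (p w).points :=
    (p w).zero_interval hz'w (le_of_lt hfw) hge'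
  have suw := hspec u w huw ⟨_, hmemu, hmemw⟩
  have o1 : Odd ((p u).firstZeroX - (p v).firstZeroX) := Int.natAbs_odd.mp su.2.2
  have o2 : Odd ((p w).firstZeroX - (p v).firstZeroX) := Int.natAbs_odd.mp sw.2.2
  have o3 : Odd ((p u).firstZeroX - (p w).firstZeroX) := Int.natAbs_odd.mp suw.2.2
  obtain ⟨a, ha⟩ := o1
  obtain ⟨b, hb⟩ := o2
  obtain ⟨c, hc⟩ := o3
  omega

lemma numTrans_lt_aux {n l : ℕ} (hl0 : 1 ≤ l) (lam mu : ℕ → ℕ) (p : Fin l → CPath n)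
    (hp : p ∈ PCn n l lam mu) : numTrans p < l := by
  classical
  have hspec : ∀ i j : Fin l, i ≠ j → CPath.Meets (p i) (p j) →
      CPath.SpeciallyIntersecting (p i) (p j) := by
    intro i j hij hm
    by_contra hc
    exact hp.2 i j hij ⟨hm, hc⟩
  obtain ⟨m, -, hm⟩ := Finset.exists_min_image Finset.univ
    (fun i => (p i).firstZeroX) ⟨⟨0, hl0⟩, Finset.mem_univ _⟩
  set S := {q : Fin l × Fin l // q.1 < q.2 ∧ CPath.Transposed (p q.1) (p q.2)} with hS
  have hdata : ∀ s : S, CPath.SpeciallyIntersecting (p s.1.1) (p s.1.2) := fun s =>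
    hspec _ _ (ne_of_lt s.2.1) (CPath.transposed_meets s.2.2)
  have hne : ∀ s : S, (p s.1.1).firstZeroX ≠ (p s.1.2).firstZeroX := by
    intro s h
    have ho := Int.natAbs_odd.mp (hdata s).2.2
    rw [h, sub_self] at ho
    exact (Int.not_even_iff_odd.mpr ho) Even.zero
  set F : S → Fin l := fun s =>
    if (p s.1.1).firstZeroX < (p s.1.2).firstZeroX then s.1.2 else s.1.1 with hF
  set G : S → Fin l := fun s =>
    if (p s.1.1).firstZeroX < (p s.1.2).firstZeroX then s.1.1 else s.1.2 with hG
  have hlt : ∀ s : S, (p (G s)).firstZeroX < (p (F s)).firstZeroX := by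
    intro s
    simp only [hF, hG]
    by_cases h : (p s.1.1).firstZeroX < (p s.1.2).firstZeroX
    · rw [if_pos h, if_pos h]; exact h
    · rw [if_neg h, if_neg h]
      exact lt_of_le_of_ne (not_lt.mp h) (hne s).symm
  have hGF : ∀ s : S, G s ≠ F s := by
    intro s h
    have := hlt s
    rw [h] at this
    exact lt_irrefl _ this
  have hmeets : ∀ s : S, CPath.Meets (p (G s)) (p (F s)) := by
    intro s
    have hm2 := CPath.transposed_meets s.2.2
    simp only [hF, hG]
    by_cases h : (p s.1.1).firstZeroX < (p s.1.2).firstZeroX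
    · rw [if_pos h, if_pos h]; exact hm2
    · rw [if_neg h, if_neg h]; exact CPath.meets_symm hm2
  have hpair : ∀ s : S, (s.1.1 = G s ∧ s.1.2 = F s) ∨ (s.1.1 = F s ∧ s.1.2 = G s) := by
    intro s
    simp only [hF, hG]
    by_cases h : (p s.1.1).firstZeroX < (p s.1.2).firstZeroX
    · rw [if_pos h, if_pos h]; exact Or.inl ⟨rfl, rfl⟩
    · rw [if_neg h, if_neg h]; exact Or.inr ⟨rfl, rfl⟩
  have hFnm : ∀ s : S, F s ≠ m := by
    intro s h
    have h1 := hm (G s) (Finset.mem_univ _)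
    have h2 := hlt s
    rw [h] at h2
    exact absurd (lt_of_le_of_lt h1 h2) (lt_irrefl _)
  have hinj : Function.Injective (fun s : S => (⟨F s, hFnm s⟩ : {v : Fin l // v ≠ m})) := by
    intro s s' hss
    have hFeq : F s = F s' := congrArg Subtype.val hss
    by_cases hGeq : G s = G s'
    · apply Subtype.ext
      have hord := s.2.1
      have hord' := s'.2.1
      rcases hpair s with ⟨h1, h2⟩ | ⟨h1, h2⟩ <;> rcases hpair s' with ⟨h3, h4⟩ | ⟨h3, h4⟩
      · exact Prod.ext (by rw [h1, h3, hGeq]) (by rw [h2, h4, hFeq])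
      · exfalso
        rw [h1, h2] at hord
        rw [h3, h4] at hord'
        rw [hFeq, hGeq] at hord
        exact lt_asymm hord hord'
      · exfalso
        rw [h1, h2] at hord
        rw [h3, h4] at hord'
        rw [hFeq, hGeq] at hord
        exact lt_asymm hord hord'
      · exact Prod.ext (by rw [h1, h3, hFeq]) (by rw [h2, h4, hGeq])
    · exfalso
      refine key_lemma p hspec (G s) (F s) (G s') (hGF s) ?_ hGeq (hmeets s) ?_ (hlt s) ?_
      · rw [hFeq]; exact hGF s'
      · rw [hFeq]; exact hmeets s'
      · rw [hFeq]; exact hlt s'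
  have hcard : numTrans p ≤ Nat.card {v : Fin l // v ≠ m} :=
    Nat.card_le_card_of_injective _ hinj
  have hcard2 : Nat.card {v : Fin l // v ≠ m} = l - 1 := by
    rw [Nat.card_eq_fintype_card]
    have : Fintype.card {v : Fin l // ¬ v = m} = Fintype.card (Fin l) -
        Fintype.card {v : Fin l // v = m} := Fintype.card_subtype_compl _
    rw [this, Fintype.card_subtype_eq, Fintype.card_fin]
  omega

theorem typeC_no_triple_point_and_decomposition
    (n l : ℕ) (hn : 1 ≤ n) (hl0 : 1 ≤ l) (lam mu : ℕ → ℕ)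
    (hlam : Antitone lam) (hmu : Antitone mu) (hsub : ∀ i, mu i ≤ lam i)
    (hl : ∀ i, l ≤ i → lam i = 0) (hrows : 0 < lam (l - 1)) :
    (∀ p ∈ PCn n l lam mu, ∀ i j k : Fin l,
      i ≠ j → j ≠ k → i ≠ k →
        ¬ ∃ v : ℤ × ℤ, v ∈ (p i).points ∧ v ∈ (p j).points ∧
            v ∈ (p k).points) ∧
    PCn n l lam mu = ⋃ k ∈ Finset.range l, PCk n l lam mu k ∧
    ∀ k k' : ℕ, k ≠ k' →
      Disjoint (PCk n l lam mu k) (PCk n l lam mu k') := by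
  refine ⟨?_, ?_, ?_⟩
  · rintro p hp i j k hij hjk hik ⟨v, hvi, hvj, hvk⟩
    have hspec : ∀ a b : Fin l, a ≠ b → CPath.Meets (p a) (p b) →
        CPath.SpeciallyIntersecting (p a) (p b) := by
      intro a b hab hm
      by_contra hc
      exact hp.2 a b hab ⟨hm, hc⟩
    have s1 := hspec i j hij ⟨v, hvi, hvj⟩
    have s2 := hspec j k hjk ⟨v, hvj, hvk⟩
    have s3 := hspec i k hik ⟨v, hvi, hvk⟩
    obtain ⟨a, ha⟩ := Int.natAbs_odd.mp s1.2.2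
    obtain ⟨b, hb⟩ := Int.natAbs_odd.mp s2.2.2
    obtain ⟨c, hc⟩ := Int.natAbs_odd.mp s3.2.2
    omega
  · ext q
    simp only [Set.mem_iUnion, Finset.mem_range]
    constructor
    · intro hq
      exact ⟨numTrans q, numTrans_lt_aux hl0 lam mu q hq, hq, rfl⟩
    · rintro ⟨k, hk, hq, -⟩
      exact hq
  · intro k k' hkk'
    rw [Set.disjoint_left]
    rintro q ⟨h1, h2⟩ ⟨h3, h4⟩
    exact hkk' (h2.symm.trans h4)
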